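/- arXiv:2002.09505 — 3 statements merged into one kernel-verified Lean document; each statement's English description precedes it below -/
import Mathlib

section
/- In a deterministic MDP, the greedy policy derived from QSS via inverse dynamics is optimal: if π(s) = I(s, τ(s)) where τ(s) ∈ argmax_{s'∈N(s)} Q_SS(s,s') and I is an inverse dynamics function, then Q*(s, π(s)) = max_a Q*(s,a) for all s. -/
lemma abs_sup'_sub_sup'_le {α : Type*} (s : Finset α) (hs : s.Nonempty) (f g : α → ℝ) :
    |s.sup' hs f - s.sup' hs g| ≤ s.sup' hs (fun x => |f x - g x|) := by
  rw [abs_sub_le_iff]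
  constructor <;>
  · rw [sub_le_iff_le_add]
    apply Finset.sup'_le
    intro x hx
    have h1 : f x - g x ≤ |f x - g x| := le_abs_self _
    have h2 : g x - f x ≤ |f x - g x| := by rw [abs_sub_comm]; exact le_abs_self _
    have hf : f x ≤ s.sup' hs f := Finset.le_sup' f hx
    have hg : g x ≤ s.sup' hs g := Finset.le_sup' g hx
    have ha : |f x - g x| ≤ s.sup' hs (fun x => |f x - g x|) :=
      Finset.le_sup' (fun x => |f x - g x|) hx
    linarith

/-- The greedy policy derived from QSS via inverse dynamics is optimal:
`Q*(s, I(s, τ(s))) = max_a Q*(s,a)`. -/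
theorem stmt_6 {S A : Type} [Fintype S] [DecidableEq S] [Fintype A] [Nonempty A]
    (T : S → A → S) (r : S → S → ℝ) (γ : ℝ) (hγ0 : 0 ≤ γ) (hγ1 : γ < 1)
    (N : S → Finset S) (hN : ∀ s, N s = Finset.univ.image (T s))
    (hNne : ∀ s, (N s).Nonempty)
    (I : S → S → A) (hI : ∀ s s', s' ∈ N s → T s (I s s') = s')
    (Qsa : S → A → ℝ)
    (hQsa : ∀ s a, Qsa s a =
      r s (T s a) + γ * Finset.univ.sup' Finset.univ_nonempty (fun a' => Qsa (T s a) a'))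
    (Qss : S → S → ℝ)
    (hQss : ∀ s, ∀ s' ∈ N s, Qss s s' =
      r s s' + γ * (N s').sup' (hNne s') (fun s'' => Qss s' s''))
    (τ : S → S) (hτmem : ∀ s, τ s ∈ N s)
    (hτopt : ∀ s, Qss s (τ s) = (N s).sup' (hNne s) (fun s' => Qss s s')) :
    ∀ s, Qsa s (I s (τ s)) = Finset.univ.sup' Finset.univ_nonempty (fun a => Qsa s a) := by
  intro s₀
  haveI : Nonempty S := ⟨s₀⟩
  -- membership of successors
  have hmem : ∀ s a, T s a ∈ N s := by
    intro s a; rw [hN]; exact Finset.mem_image_of_mem _ (Finset.mem_univ a)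
  -- sup over N s' of Qss equals sup over actions
  have hsupN : ∀ s' : S,
      (N s').sup' (hNne s') (fun s'' => Qss s' s'') =
      Finset.univ.sup' Finset.univ_nonempty (fun a' => Qss s' (T s' a')) := by
    intro s'
    have h := Finset.sup'_congr (hNne s') (hN s')
      (fun x _ => rfl (a := Qss s' x))
    rw [h, Finset.sup'_image]
    rfl
  -- key: Qsa s a = Qss s (T s a)
  set D : S × A → ℝ := fun p => |Qsa p.1 p.2 - Qss p.1 (T p.1 p.2)| with hD
  set M : ℝ := Finset.univ.sup' Finset.univ_nonempty D with hM
  have hDleM : ∀ p : S × A, D p ≤ M := fun p => Finset.le_sup' D (Finset.mem_univ p)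
  have hM0 : 0 ≤ M := le_trans (abs_nonneg _) (hDleM (Classical.arbitrary _))
  have hMγ : M ≤ γ * M := by
    apply Finset.sup'_le
    intro p _
    obtain ⟨s, a⟩ := p
    have e1 := hQsa s a
    have e2 := hQss s (T s a) (hmem s a)
    have : D (s, a) = γ * |Finset.univ.sup' Finset.univ_nonempty (fun a' => Qsa (T s a) a') -
        (N (T s a)).sup' (hNne (T s a)) (fun s'' => Qss (T s a) s'')| := by
      simp only [hD]
      rw [e1, e2]
      rw [show ∀ x y z : ℝ, x + γ * y - (x + γ * z) = γ * (y - z) from fun x y z => by ring]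
      rw [abs_mul, abs_of_nonneg hγ0]
    rw [this]
    have hb : |Finset.univ.sup' Finset.univ_nonempty (fun a' => Qsa (T s a) a') -
        (N (T s a)).sup' (hNne (T s a)) (fun s'' => Qss (T s a) s'')| ≤ M := by
      rw [hsupN (T s a)]
      refine le_trans (abs_sup'_sub_sup'_le _ _ _ _) ?_
      apply Finset.sup'_le
      intro a' _
      exact hDleM (T s a, a')
    exact mul_le_mul_of_nonneg_left hb hγ0
  have hMzero : M = 0 := by nlinarith
  have key : ∀ s a, Qsa s a = Qss s (T s a) := by
    intro s a
    have h1 : D (s, a) ≤ 0 := hMzero ▸ hDleM (s, a)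
    have h2 : D (s, a) = 0 := le_antisymm h1 (abs_nonneg _)
    have := abs_eq_zero.mp h2
    linarith [sub_eq_zero.mp this]
  -- conclude
  have hIT : T s₀ (I s₀ (τ s₀)) = τ s₀ := hI s₀ (τ s₀) (hτmem s₀)
  rw [key s₀ (I s₀ (τ s₀)), hIT, hτopt s₀]
  have : Finset.univ.sup' Finset.univ_nonempty (fun a => Qsa s₀ a) =
      Finset.univ.sup' Finset.univ_nonempty (fun a => Qss s₀ (T s₀ a)) :=
    Finset.sup'_congr _ rfl (fun a _ => key s₀ a)
  rw [this, ← hsupN s₀]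
end

section
/- In a stochastic MDP (with transition probabilities P(s'|s,a)), the fixed point Q_SS of the QSS Bellman equation, where N(s) = {s' : ∃a, P(s'|s,a) > 0}, overestimates the true optimal value: for every state s, max_{s'∈N(s)} Q_SS(s,s') ≥ max_a Q*(s,a), where Q* is the standard optimal state-action value. -/
/-- In a stochastic MDP, the QSS fixed point overestimates the optimal value:
`max_{s'∈N(s)} Q_SS(s,s') ≥ max_a Q*(s,a)`. -/
theorem stmt_7 {S A : Type} [Fintype S] [Fintype A] [Nonempty A]
    (P : S → A → S → ℝ) (hP0 : ∀ s a s', 0 ≤ P s a s')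
    (hP1 : ∀ s a, ∑ s', P s a s' = 1)
    (r : S → S → ℝ) (γ : ℝ) (hγ0 : 0 ≤ γ) (hγ1 : γ < 1)
    (N : S → Finset S) (hN : ∀ s s', s' ∈ N s ↔ ∃ a, 0 < P s a s')
    (hNne : ∀ s, (N s).Nonempty)
    (Qsa : S → A → ℝ)
    (hQsa : ∀ s a, Qsa s a = ∑ s', P s a s' *
      (r s s' + γ * Finset.univ.sup' Finset.univ_nonempty (fun a' => Qsa s' a')))
    (Qss : S → S → ℝ)
    (hQss : ∀ s, ∀ s' ∈ N s, Qss s s' =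
      r s s' + γ * (N s').sup' (hNne s') (fun s'' => Qss s' s'')) :
    ∀ s, Finset.univ.sup' Finset.univ_nonempty (fun a => Qsa s a) ≤
      (N s).sup' (hNne s) (fun s' => Qss s s') := by
  intro s₀
  haveI : Nonempty S := ⟨s₀⟩
  set M : ℝ := Finset.univ.sup' Finset.univ_nonempty
    (fun s => (Finset.univ.sup' Finset.univ_nonempty fun a => Qsa s a)
      - (N s).sup' (hNne s) (fun s' => Qss s s')) with hMdef
  have key : ∀ s, (Finset.univ.sup' Finset.univ_nonempty fun a => Qsa s a)
      - (N s).sup' (hNne s) (fun s' => Qss s s') ≤ γ * M := by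
    intro s
    rw [sub_le_iff_le_add]
    apply Finset.sup'_le
    intro a _
    rw [hQsa s a]
    have hbound : ∀ s', 0 < P s a s' →
        r s s' + γ * Finset.univ.sup' Finset.univ_nonempty (fun a' => Qsa s' a')
          ≤ γ * M + (N s).sup' (hNne s) (fun s'' => Qss s s'') := by
      intro s' hp
      have hmem : s' ∈ N s := (hN s s').2 ⟨a, hp⟩
      have h1 : Qss s s' ≤ (N s).sup' (hNne s) (fun s'' => Qss s s'') :=
        Finset.le_sup' _ hmem
      have h2 : (Finset.univ.sup' Finset.univ_nonempty fun a' => Qsa s' a')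
          - (N s').sup' (hNne s') (fun s'' => Qss s' s'') ≤ M := by
        rw [hMdef]
        exact Finset.le_sup' (fun s => (Finset.univ.sup' Finset.univ_nonempty
          fun a => Qsa s a) - (N s).sup' (hNne s) (fun t => Qss s t)) (Finset.mem_univ s')
      have h3 := hQss s s' hmem
      nlinarith
    calc ∑ s', P s a s' *
          (r s s' + γ * Finset.univ.sup' Finset.univ_nonempty (fun a' => Qsa s' a'))
        ≤ ∑ s', P s a s' * (γ * M + (N s).sup' (hNne s) (fun s'' => Qss s s'')) := by
          apply Finset.sum_le_sum
          intro s' _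
          rcases eq_or_lt_of_le (hP0 s a s') with h | h
          · rw [← h]; simp
          · exact mul_le_mul_of_nonneg_left (hbound s' h) (hP0 s a s')
      _ = γ * M + (N s).sup' (hNne s) (fun s'' => Qss s s'') := by
          rw [← Finset.sum_mul, hP1]; ring
  have hMle : M ≤ γ * M := by
    rw [hMdef]
    apply Finset.sup'_le
    intro s _
    exact key s
  have hM0 : M ≤ 0 := by nlinarith
  have h := key s₀
  nlinarith
end

section
/- In a deterministic MDP where every state has a self-loop among its neighbors and rewards are nonpositive with r(s,s) = 0 exactly at goal states, a state g is a goal state (r(g,g) = 0 and g ∈ N(g)) if and only if Q_SS(g,g) = 0 and Q_SS(g,g) = max_{s'∈N(g)} Q_SS(g,s'). -/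
/-- With self-loops everywhere and nonpositive rewards, `g` is a goal state
(`r(g,g) = 0`) iff `Q_SS(g,g) = 0` and `Q_SS(g,g)` is the max over neighbors. -/
theorem stmt_19 {S : Type} [Fintype S]
    (N : S → Finset S) (hself : ∀ s, s ∈ N s)
    (r : S → S → ℝ) (hr : ∀ s s', r s s' ≤ 0)
    (γ : ℝ) (hγ0 : 0 ≤ γ) (hγ1 : γ < 1)
    (Q : S → S → ℝ)
    (hQ : ∀ s, ∀ s' ∈ N s, Q s s' =
      r s s' + γ * (N s').sup' ⟨s', hself s'⟩ (fun s'' => Q s' s'')) :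
    ∀ g, r g g = 0 ↔
      (Q g g = 0 ∧ Q g g = (N g).sup' ⟨g, hself g⟩ (fun s' => Q g s')) := by
  classical
  have key : ∀ s, ∀ s' ∈ N s, Q s s' ≤ 0 := by
    intro s s' hs'
    set P : Finset (S × S) := Finset.univ.filter (fun p => p.2 ∈ N p.1) with hP
    have hmem : ∀ a b, b ∈ N a → (a, b) ∈ P := by
      intro a b h; simp [hP, h]
    have hne : P.Nonempty := ⟨(s, s'), hmem s s' hs'⟩
    set M := P.sup' hne (fun p => Q p.1 p.2) with hM
    have hub : ∀ p ∈ P, Q p.1 p.2 ≤ M := fun p hp => Finset.le_sup' (fun p : S × S => Q p.1 p.2) hp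
    have hstep : M ≤ γ * M := by
      obtain ⟨p, hp, hpeq⟩ := Finset.exists_mem_eq_sup' hne (fun p => Q p.1 p.2)
      have hpN : p.2 ∈ N p.1 := by simpa [hP] using hp
      have hsup : (N p.2).sup' ⟨p.2, hself p.2⟩ (fun s'' => Q p.2 s'') ≤ M := by
        apply Finset.sup'_le
        intro b hb
        exact hub (p.2, b) (hmem _ _ hb)
      have h1 := mul_le_mul_of_nonneg_left hsup hγ0
      have h2 := hQ p.1 p.2 hpN
      have h3 : M = Q p.1 p.2 := by rw [hM]; exact hpeq
      linarith [hr p.1 p.2]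
    have hM0 : M ≤ 0 := by nlinarith
    exact le_trans (hub (s, s') (hmem s s' hs')) hM0
  intro g
  have hsup_le : (N g).sup' ⟨g, hself g⟩ (fun s' => Q g s') ≤ 0 :=
    Finset.sup'_le _ _ (fun b hb => key g b hb)
  have hgg := hQ g g (hself g)
  have hQle : Q g g ≤ (N g).sup' ⟨g, hself g⟩ (fun s' => Q g s') :=
    Finset.le_sup' _ (hself g)
  constructor
  · intro hr0
    rw [hr0, zero_add] at hgg
    have h2 : γ * Q g g ≤ γ * (N g).sup' ⟨g, hself g⟩ (fun s' => Q g s') :=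
      mul_le_mul_of_nonneg_left hQle hγ0
    have hle0 : Q g g ≤ 0 := key g g (hself g)
    have hQ0 : Q g g = 0 := by nlinarith
    refine ⟨hQ0, le_antisymm hQle ?_⟩
    rw [hQ0]; exact hsup_le
  · rintro ⟨h0, heq⟩
    have hs0 : (N g).sup' ⟨g, hself g⟩ (fun s' => Q g s') = 0 := by
      rw [← heq, h0]
    rw [h0, hs0] at hgg
    linarith
end
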